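/- In the category LRF of labeled rooted forests, composition of morphisms is associative, so LRF is a category with identity morphisms (C_null, C_full, id). -/

import Mathlib

attribute [local instance] Classical.propDecidable

noncomputable section

/-- A labeled rooted forest: a finite set of vertex labels together with a
parent function (`none` = root), acyclic via a depth function. -/
structure Forest where
  verts : Finset ℕ
  parent : ℕ → Option ℕ
  parent_mem : ∀ v ∈ verts, ∀ p, parent v = some p → p ∈ verts
  wf : ∃ d : ℕ → ℕ, ∀ v ∈ verts, ∀ p, parent v = some p → d p < d v

namespace Forest

/-- `S` is the vertex set of a subforest of `F` (the branches `P_C(F)` severed by an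
admissible cut `C`): a subset of the vertices closed under passing to children. -/
def IsSub (F : Forest) (S : Finset ℕ) : Prop :=
  S ⊆ F.verts ∧ ∀ v ∈ S, ∀ w ∈ F.verts, F.parent w = some v → w ∈ S

/-- The subforest `P_C(F)` determined by the (descendant-closed) vertex set `S`. -/
def restrict (F : Forest) (S : Finset ℕ) : Forest where
  verts := S ∩ F.verts
  parent v := (F.parent v).bind fun p =>
    if v ∈ S ∩ F.verts ∧ p ∈ S ∩ F.verts then some p else none
  parent_mem := by
    intro v hv p hp
    beta_reduce at hp
    cases h : F.parent v with
    | none => rw [h] at hp; simp at hp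
    | some q =>
      rw [h] at hp
      simp only [Option.bind_some] at hp
      split at hp
      · rename_i hc; cases hp; exact hc.2
      · simp at hp
  wf := by
    obtain ⟨d, hd⟩ := F.wf
    refine ⟨d, ?_⟩
    intro v hv p hp
    beta_reduce at hp
    cases h : F.parent v with
    | none => rw [h] at hp; simp at hp
    | some q =>
      rw [h] at hp
      simp only [Option.bind_some] at hp
      split at hp
      · rename_i hc; cases hp
        exact hd v (Finset.mem_inter.mp hv).2 _ h
      · simp at hp

/-- The root part `R_C(F) = F/P_C(F)` determined by the severed vertex set `S`. -/
def quot (F : Forest) (S : Finset ℕ) : Forest where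
  verts := F.verts \ S
  parent v := (F.parent v).bind fun p =>
    if v ∈ F.verts \ S ∧ p ∈ F.verts \ S then some p else none
  parent_mem := by
    intro v hv p hp
    beta_reduce at hp
    cases h : F.parent v with
    | none => rw [h] at hp; simp at hp
    | some q =>
      rw [h] at hp
      simp only [Option.bind_some] at hp
      split at hp
      · rename_i hc; cases hp; exact hc.2
      · simp at hp
  wf := by
    obtain ⟨d, hd⟩ := F.wf
    refine ⟨d, ?_⟩
    intro v hv p hp
    beta_reduce at hp
    cases h : F.parent v with
    | none => rw [h] at hp; simp at hp
    | some q =>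
      rw [h] at hp
      simp only [Option.bind_some] at hp
      split at hp
      · rename_i hc; cases hp
        exact hd v (Finset.mem_sdiff.mp hv).1 _ h
      · simp at hp

/-- `φ` realizes an isomorphism of labeled rooted forests (a root- and
incidence-preserving bijection on labels). -/
def IsoMap (F G : Forest) (φ : ℕ → ℕ) : Prop :=
  Set.BijOn φ (F.verts : Set ℕ) (G.verts : Set ℕ) ∧
    ∀ v ∈ F.verts, (F.parent v).map φ = G.parent (φ v)

/-- Isomorphism of labeled rooted forests. -/
def Iso (F G : Forest) : Prop := ∃ φ, IsoMap F G φ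

/-- A function on forests which only depends on the isomorphism class. -/
def Invariant (f : Forest → ℚ) : Prop := ∀ F G, Iso F G → f F = f G

/-- A function on forests supported on finitely many isomorphism classes. -/
def FinSupp (f : Forest → ℚ) : Prop :=
  ∃ s : Finset Forest, ∀ F, f F ≠ 0 → ∃ G ∈ s, Iso F G

/-- The Ringel-Hall convolution product:
`(f × g)(F) = ∑_{G ⊆ F} f(G) · g(F/G)`, the sum running over subforests of `F`. -/
def conv (f g : Forest → ℚ) : Forest → ℚ := fun F =>
  ∑ S ∈ F.verts.powerset, if F.IsSub S then f (F.restrict S) * g (F.quot S) else 0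

end Forest

end

namespace Forest

/-- A (raw) morphism datum in the category `LRF`: a triple `(C₁, C₂, f)`. -/
structure Mor where
  cut1 : Finset ℕ
  cut2 : Finset ℕ
  map : ℕ → ℕ

/-- `(C₁, C₂, f)` is a morphism `F → G` in `LRF`: `C₁` is an admissible cut of `F`
(recorded by the severed vertex set), `C₂` one of `G`, and `f` an isomorphism
`R_{C₁}(F) ≅ P_{C₂}(G)`. -/
def IsMor (F G : Forest) (m : Mor) : Prop :=
  F.IsSub m.cut1 ∧ G.IsSub m.cut2 ∧
    IsoMap (F.quot m.cut1) (G.restrict m.cut2) m.map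

/-- Composition of morphisms in `LRF` (`m : F → F₂` followed by `n : F₂ → F₃`):
the cut of `n` is pulled back through `m` to a cut `E₁ ≥ C₁` of `F`, and the new
image is the image of `R_{E₁}(F)` under the composite map. -/
noncomputable def Mor.comp (F : Forest) (m n : Mor) : Mor :=
  ⟨m.cut1 ∪ ((F.quot m.cut1).verts.filter fun v => m.map v ∈ n.cut1),
   ((F.quot (m.cut1 ∪ ((F.quot m.cut1).verts.filter fun v => m.map v ∈ n.cut1))).verts).image
     (n.map ∘ m.map),
   n.map ∘ m.map⟩

/-- The identity morphism `(C_null, C_full, id)` of `F`. -/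
def idMor (F : Forest) : Mor := ⟨∅, F.verts, id⟩

/-- Equality of morphisms out of `F` (the map only matters on `R_{C₁}(F)`). -/
def MorEq (F : Forest) (m n : Mor) : Prop :=
  m.cut1 = n.cut1 ∧ m.cut2 = n.cut2 ∧
    ∀ v ∈ (F.quot m.cut1).verts, m.map v = n.map v

/-- The zero morphisms `F → G`: morphisms with empty image (factoring through `∅`). -/
def IsZeroMor (F G : Forest) (m : Mor) : Prop := IsMor F G m ∧ m.cut2 = ∅

end Forest

/-!
Both `P_C(F)` and `R_C(F)` are subforests induced on a vertex set, and an isomorphism carries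
induced subforests to induced subforests. For `f : R_{C₁}(F₁) ≅ P_{C₂}(F₂)` and
`g : R_{D₂}(F₂) ≅ P_{D₃}(F₃)`, the pulled-back cut `E₁ = C₁ ∪ f⁻¹(D₂)` is admissible because
preimages of child-closed sets are child-closed, and
`R_{E₁}(F₁) = R_{f⁻¹D₂}(R_{C₁}F₁) ≅ R_{D₂}(P_{C₂}F₂) = P_{C₂}(R_{D₂}F₂)`,
which `g` carries onto the subforest induced on `g(C₂ \ D₂)`; this set is child-closed in `F₃`
since `D₃` is and `g` reflects the parent relation. Composing further with a morphism that cuts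
`B₃` from `F₃`, both bracketings pull back the cut of the vertices `v` with `v ∈ C₁`, `f v ∈ D₂`
or `g (f v) ∈ B₃`, and both carry the map `h ∘ g ∘ f`.
-/

namespace Forest

section Basic

variable {F G : Forest} {S T : Finset ℕ}

theorem ext (hverts : F.verts = G.verts) (hparent : F.parent = G.parent) : F = G := by
  cases F; cases G; cases hverts; cases hparent; rfl

theorem eq_of_parent_eq_some_iff (hverts : F.verts = G.verts)
    (hparent : ∀ v p, F.parent v = some p ↔ G.parent v = some p) : F = G :=
  ext hverts (funext fun v => Option.ext (hparent v))

@[simp] theorem restrict_verts : (F.restrict S).verts = S ∩ F.verts := rfl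

@[simp] theorem quot_verts : (F.quot S).verts = F.verts \ S := rfl

@[simp] theorem restrict_parent_eq_some {v p : ℕ} :
    (F.restrict S).parent v = some p ↔
      F.parent v = some p ∧ v ∈ S ∩ F.verts ∧ p ∈ S ∩ F.verts := by
  simp only [restrict, Option.bind_eq_some_iff]
  grind

@[simp] theorem quot_parent_eq_some {v p : ℕ} :
    (F.quot S).parent v = some p ↔
      F.parent v = some p ∧ v ∈ F.verts \ S ∧ p ∈ F.verts \ S := by
  simp only [quot, Option.bind_eq_some_iff]
  grind

theorem quot_quot : (F.quot S).quot T = F.quot (S ∪ T) :=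
  eq_of_parent_eq_some_iff (by simp [sdiff_sdiff_left]) fun v p => by
    simp only [quot_parent_eq_some, quot_verts, Finset.mem_sdiff, Finset.mem_union]
    tauto

theorem restrict_quot_comm : (F.restrict S).quot T = (F.quot T).restrict S :=
  eq_of_parent_eq_some_iff (by simp [Finset.inter_sdiff_assoc]) fun v p => by
    simp only [quot_parent_eq_some, restrict_parent_eq_some, restrict_verts, quot_verts,
      Finset.mem_sdiff, Finset.mem_inter]
    tauto

theorem restrict_restrict_of_subset (h : T ⊆ S) : (F.restrict S).restrict T = F.restrict T :=
  eq_of_parent_eq_some_iff (by simp [← Finset.inter_assoc, Finset.inter_eq_left.mpr h])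
    fun v p => by
      simp only [restrict_parent_eq_some, restrict_verts, Finset.mem_inter]
      have := @h v
      have := @h p
      tauto

end Basic

def ChildClosed (F : Forest) (S : Finset ℕ) : Prop :=
  ∀ v ∈ S, ∀ w ∈ F.verts, F.parent w = some v → w ∈ S

section ChildClosed

variable {F : Forest} {C S T : Finset ℕ}

theorem IsSub.childClosed (h : F.IsSub S) : F.ChildClosed S := h.2

theorem ChildClosed.restrict (h : F.ChildClosed C) (S : Finset ℕ) :
    (F.restrict S).ChildClosed C := fun v hv w hw hwv =>
  h v hv w (Finset.mem_inter.mp hw).2 (restrict_parent_eq_some.mp hwv).1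

theorem ChildClosed.quot (h : F.ChildClosed C) (S : Finset ℕ) :
    (F.quot S).ChildClosed C := fun v hv w hw hwv =>
  h v hv w (Finset.mem_sdiff.mp hw).1 (quot_parent_eq_some.mp hwv).1

theorem ChildClosed.isSub_inter_verts (h : F.ChildClosed C) : F.IsSub (C ∩ F.verts) :=
  ⟨Finset.inter_subset_right, fun v hv w hw hwv =>
    Finset.mem_inter.mpr ⟨h v (Finset.mem_inter.mp hv).1 w hw hwv, hw⟩⟩

theorem IsSub.union_quot (hS : F.IsSub S) (hT : (F.quot S).IsSub T) : F.IsSub (S ∪ T) := by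
  refine ⟨Finset.union_subset hS.1 (hT.1.trans Finset.sdiff_subset), fun v hv w hw hwv => ?_⟩
  rcases Finset.mem_union.mp hv with hvS | hvT
  · exact Finset.mem_union_left _ (hS.2 v hvS w hw hwv)
  · by_cases hwS : w ∈ S
    · exact Finset.mem_union_left _ hwS
    · have hw' : w ∈ F.verts \ S := Finset.mem_sdiff.mpr ⟨hw, hwS⟩
      exact Finset.mem_union_right _
        (hT.2 v hvT w hw' (quot_parent_eq_some.mpr ⟨hwv, hw', hT.1 hvT⟩))

end ChildClosed

section IsoMap

variable {F G H K : Forest} {φ ψ : ℕ → ℕ}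

theorem isoMap_of_parent_eq_some_iff (hbij : Set.BijOn φ G.verts H.verts)
    (hparent : ∀ v ∈ G.verts, ∀ p ∈ G.verts,
      G.parent v = some p ↔ H.parent (φ v) = some (φ p)) :
    IsoMap G H φ := by
  refine ⟨hbij, fun v hv => Option.ext fun q => ⟨fun hq => ?_, fun hq => ?_⟩⟩
  · obtain ⟨p, hp, rfl⟩ := Option.map_eq_some_iff.mp hq
    exact (hparent v hv p (G.parent_mem v hv p hp)).mp hp
  · obtain ⟨p, hpG, rfl⟩ := hbij.surjOn (H.parent_mem _ (hbij.mapsTo hv) q hq)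
    rw [(hparent v hv p hpG).mpr hq, Option.map_some]

namespace IsoMap

theorem parent_eq_some_iff (h : IsoMap G H φ) {v p : ℕ} (hv : v ∈ G.verts)
    (hp : p ∈ G.verts) : G.parent v = some p ↔ H.parent (φ v) = some (φ p) := by
  rw [← h.2 v hv, Option.map_eq_some_iff]
  refine ⟨fun hvp => ⟨p, hvp, rfl⟩, fun ⟨q, hq, hqp⟩ => ?_⟩
  rwa [h.1.injOn (G.parent_mem v hv q hq) hp hqp] at hq

theorem image_verts (h : IsoMap G H φ) : G.verts.image φ = H.verts :=
  Finset.coe_injective (by simpa using h.1.image_eq)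

theorem comp (h : IsoMap G H φ) (h' : IsoMap H K ψ) : IsoMap G K (ψ ∘ φ) :=
  ⟨h'.1.comp h.1, fun v hv => by
    rw [← Option.map_map, h.2 v hv, h'.2 _ (h.1.mapsTo hv), Function.comp_apply]⟩

theorem restrict (h : IsoMap G H φ) (S : Finset ℕ) :
    IsoMap (G.restrict S) (H.restrict ((S ∩ G.verts).image φ)) φ := by
  have hsub : (S ∩ G.verts).image φ ⊆ H.verts := by
    rw [← h.image_verts]; exact Finset.image_subset_image Finset.inter_subset_right
  have hmem : ∀ {v}, v ∈ G.verts → (φ v ∈ (S ∩ G.verts).image φ ↔ v ∈ S ∩ G.verts) :=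
    fun hv => by
      rw [← Finset.mem_coe, Finset.coe_image, ← Finset.mem_coe (s := S ∩ G.verts)]
      exact h.1.injOn.mem_image_iff (Finset.coe_subset.mpr Finset.inter_subset_right) hv
  refine isoMap_of_parent_eq_some_iff ?_ fun v hv p hp => ?_
  · rw [restrict_verts, restrict_verts, Finset.inter_eq_left.mpr hsub, Finset.coe_image]
    exact (h.1.injOn.mono Finset.inter_subset_right).bijOn_image
  · have hvG := (Finset.mem_inter.mp hv).2
    have hpG := (Finset.mem_inter.mp hp).2
    rw [restrict_parent_eq_some, restrict_parent_eq_some, Finset.inter_eq_left.mpr hsub,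
      hmem hvG, hmem hpG, h.parent_eq_some_iff hvG hpG]

theorem quot_preimage (h : IsoMap G H φ) (D : Finset ℕ) :
    IsoMap (G.quot (G.verts.filter (φ · ∈ D))) (H.quot D) φ := by
  refine isoMap_of_parent_eq_some_iff ⟨fun v hv => ?_, h.1.injOn.mono ?_, fun y hy => ?_⟩
    fun v hv p hp => ?_
  · simp only [quot_verts, Finset.coe_sdiff, Set.mem_sdiff, Finset.mem_coe,
      Finset.mem_filter] at hv ⊢
    exact ⟨h.1.mapsTo hv.1, fun hD => hv.2 ⟨hv.1, hD⟩⟩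
  · simp only [quot_verts, Finset.coe_sdiff]; exact Set.sdiff_subset
  · simp only [quot_verts, Finset.coe_sdiff, Set.mem_sdiff, Finset.mem_coe] at hy
    obtain ⟨v, hv, rfl⟩ := h.1.surjOn hy.1
    exact ⟨v, by simp [hv, hy.2], rfl⟩
  · simp only [quot_verts, Finset.mem_sdiff, Finset.mem_filter] at hv hp
    have hvH : φ v ∈ H.verts := h.1.mapsTo hv.1
    have hpH : φ p ∈ H.verts := h.1.mapsTo hp.1
    simp only [quot_parent_eq_some, Finset.mem_sdiff, Finset.mem_filter,
      h.parent_eq_some_iff hv.1 hp.1, hvH, hpH]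
    tauto

theorem isSub_preimage (h : IsoMap G H φ) {D : Finset ℕ} (hD : H.ChildClosed D) :
    G.IsSub (G.verts.filter (φ · ∈ D)) := by
  refine ⟨Finset.filter_subset _ _, fun v hv w hw hwv => Finset.mem_filter.mpr ⟨hw, ?_⟩⟩
  have hv := Finset.mem_filter.mp hv
  exact hD _ hv.2 _ (h.1.mapsTo hw) ((h.parent_eq_some_iff hw hv.1).mp hwv)

theorem isSub_image {C S : Finset ℕ} (h : IsoMap G (F.restrict C) φ) (hC : F.IsSub C)
    (hS : G.IsSub S) : F.IsSub (S.image φ) := by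
  have hmaps : ∀ {v}, v ∈ G.verts → φ v ∈ C ∩ F.verts := fun hv => h.1.mapsTo hv
  refine ⟨fun y hy => ?_, fun y hy w hw hwy => ?_⟩
  · obtain ⟨v, hv, rfl⟩ := Finset.mem_image.mp hy
    exact (Finset.mem_inter.mp (hmaps (hS.1 hv))).2
  obtain ⟨v, hv, rfl⟩ := Finset.mem_image.mp hy
  have hφv := hmaps (hS.1 hv)
  have hwC : w ∈ C ∩ F.verts :=
    Finset.mem_inter.mpr ⟨hC.2 _ (Finset.mem_inter.mp hφv).1 w hw hwy, hw⟩
  obtain ⟨u, hu, rfl⟩ := h.1.surjOn hwC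
  have huv : G.parent u = some v :=
    (h.parent_eq_some_iff hu (hS.1 hv)).mpr (restrict_parent_eq_some.mpr ⟨hwy, hwC, hφv⟩)
  exact Finset.mem_image_of_mem φ (hS.2 v hv u hu huv)

end IsoMap

end IsoMap

section Mor

variable {F F1 F2 F3 : Forest} {m n p : Mor}

theorem Mor.comp_cut1 :
    (Mor.comp F m n).cut1 = m.cut1 ∪ (F.quot m.cut1).verts.filter (m.map · ∈ n.cut1) := rfl

theorem Mor.comp_cut2 :
    (Mor.comp F m n).cut2 = (F.quot (Mor.comp F m n).cut1).verts.image (n.map ∘ m.map) := rfl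

theorem Mor.mem_comp_cut1 {v : ℕ} : v ∈ (Mor.comp F m n).cut1 ↔
    v ∈ m.cut1 ∨ (v ∈ F.verts ∧ v ∉ m.cut1 ∧ m.map v ∈ n.cut1) := by
  simp [Mor.comp_cut1, and_assoc]

theorem IsMor.map_mem (hm : IsMor F1 F2 m) {v : ℕ} (hv : v ∈ F1.verts) (hvm : v ∉ m.cut1) :
    m.map v ∈ F2.verts :=
  (Finset.mem_inter.mp (hm.2.2.1.mapsTo (Finset.mem_sdiff.mpr ⟨hv, hvm⟩))).2

theorem IsMor.image_quot_cut1 (hm : IsMor F1 F2 m) :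
    (F1.quot m.cut1).verts.image m.map = m.cut2 := by
  rw [hm.2.2.image_verts, restrict_verts, Finset.inter_eq_left.mpr hm.2.1.1]

theorem isoMap_quot_comp_cut1 (hm : IsMor F1 F2 m) :
    IsoMap (F1.quot (Mor.comp F1 m n).cut1) ((F2.quot n.cut1).restrict m.cut2) m.map := by
  rw [Mor.comp_cut1, ← quot_quot, ← restrict_quot_comm]
  exact hm.2.2.quot_preimage n.cut1

theorem Mor.comp_cut2_eq (hm : IsMor F1 F2 m) :
    (Mor.comp F1 m n).cut2 = (m.cut2 ∩ (F2.quot n.cut1).verts).image n.map := by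
  rw [Mor.comp_cut2, ← Finset.image_image, (isoMap_quot_comp_cut1 hm).image_verts,
    restrict_verts]

theorem IsMor.comp (hm : IsMor F1 F2 m) (hn : IsMor F2 F3 n) :
    IsMor F1 F3 (Mor.comp F1 m n) := by
  have hsub : (m.cut2 ∩ (F2.quot n.cut1).verts).image n.map ⊆ n.cut2 := by
    refine (Finset.image_subset_image Finset.inter_subset_right).trans ?_
    rw [hn.2.2.image_verts, restrict_verts]
    exact Finset.inter_subset_left
  have hn' := hn.2.2.restrict m.cut2
  rw [restrict_restrict_of_subset hsub] at hn'
  refine ⟨?_, ?_, ?_⟩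
  · rw [Mor.comp_cut1]
    exact hm.1.union_quot (hm.2.2.isSub_preimage (hn.1.childClosed.restrict m.cut2))
  · rw [Mor.comp_cut2_eq hm]
    exact hn.2.2.isSub_image hn.2.1 (hm.2.1.childClosed.quot n.cut1).isSub_inter_verts
  · rw [Mor.comp_cut2_eq hm]
    exact (isoMap_quot_comp_cut1 hm).comp hn'

theorem Mor.comp_assoc (hm : IsMor F1 F2 m) :
    MorEq F1 (Mor.comp F1 (Mor.comp F1 m n) p) (Mor.comp F1 m (Mor.comp F2 n p)) := by
  have hcut1 : (Mor.comp F1 (Mor.comp F1 m n) p).cut1 =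
      (Mor.comp F1 m (Mor.comp F2 n p)).cut1 := by
    ext v
    simp only [Mor.mem_comp_cut1]
    by_cases hv : v ∈ F1.verts ∧ v ∉ m.cut1
    · have := hm.map_mem hv.1 hv.2
      tauto
    · tauto
  exact ⟨hcut1, by rw [Mor.comp_cut2, Mor.comp_cut2, hcut1]; rfl, fun _ _ => rfl⟩

theorem isMor_idMor (F : Forest) : IsMor F F (idMor F) := by
  refine ⟨⟨Finset.empty_subset _, fun v hv => absurd hv (Finset.notMem_empty v)⟩,
    ⟨subset_rfl, fun _ _ _ hw _ => hw⟩, isoMap_of_parent_eq_some_iff ?_ fun v hv p hp => ?_⟩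
  · simpa [idMor] using Set.bijOn_id (F.verts : Set ℕ)
  · simp_all [idMor]

theorem Mor.id_comp (hm : IsMor F1 F2 m) : MorEq F1 (Mor.comp F1 (idMor F1) m) m := by
  have hcut1 : (Mor.comp F1 (idMor F1) m).cut1 = m.cut1 := by
    ext v
    simpa [Mor.mem_comp_cut1, idMor] using fun hv => hm.1.1 hv
  exact ⟨hcut1, by rw [Mor.comp_cut2, hcut1]; exact hm.image_quot_cut1, fun _ _ => rfl⟩

theorem Mor.comp_id (hm : IsMor F1 F2 m) : MorEq F1 (Mor.comp F1 m (idMor F2)) m := by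
  have hcut1 : (Mor.comp F1 m (idMor F2)).cut1 = m.cut1 := by
    ext v
    simp [Mor.mem_comp_cut1, idMor]
  exact ⟨hcut1, by rw [Mor.comp_cut2, hcut1]; exact hm.image_quot_cut1, fun _ _ => rfl⟩

end Mor

end Forest

open Forest in
/-- In the category `LRF` of labeled rooted forests, composition of
morphisms is well defined and associative, and `(C_null, C_full, id)` are
identity morphisms, so `LRF` is a category. -/
theorem LRF_is_category :
    (∀ (F1 F2 F3 : Forest) (m n : Mor), IsMor F1 F2 m → IsMor F2 F3 n →
      IsMor F1 F3 (Mor.comp F1 m n)) ∧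
    (∀ (F1 F2 F3 F4 : Forest) (m n p : Mor),
      IsMor F1 F2 m → IsMor F2 F3 n → IsMor F3 F4 p →
      MorEq F1 (Mor.comp F1 (Mor.comp F1 m n) p) (Mor.comp F1 m (Mor.comp F2 n p))) ∧
    (∀ F : Forest, IsMor F F (idMor F)) ∧
    (∀ (F1 F2 : Forest) (m : Mor), IsMor F1 F2 m →
      MorEq F1 (Mor.comp F1 (idMor F1) m) m ∧ MorEq F1 (Mor.comp F1 m (idMor F2)) m) :=
  ⟨fun _ _ _ _ _ hm hn => hm.comp hn,
   fun _ _ _ _ _ _ _ hm _ _ => Mor.comp_assoc hm,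
   isMor_idMor,
   fun _ _ _ hm => ⟨Mor.id_comp hm, Mor.comp_id hm⟩⟩
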